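/- Let (ν⁽ˡ⁾(X))_{l=0}^{L} be Bochner-integrable random vectors in ℝ^p and set Z⁽ˡ⁾ := ν⁽ˡ⁾(X) − E[ν⁽ˡ⁾(X)] for each l, with Z⁽⁰⁾ = 0. Suppose (Z⁽ˡ⁾)_{l=0}^{L} is a weak martingale, i.e. E[ Z⁽ⁱ⁾ | σ(Z⁽ʲ⁾) ] = Z⁽ʲ⁾ almost surely whenever j < i, and that ‖Z⁽ˡ⁾ − Z⁽ˡ⁻¹⁾‖₂ ≤ M almost surely for every l ∈ {1,…,L}, with M > 0. Then for every l ∈ {1,…,L} and every a > 0, P( ‖ν⁽ˡ⁾(X) − E[ν⁽ˡ⁾(X)]‖₂ ≥ M·a ) < 2·exp( 1 − (a−1)²/(2l) ). -/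

import Mathlib

/-!
Following Pinelis, `cosh (c * ‖·‖)` is dominated by a first-order expansion: for `‖d‖ ≤ M`,
`cosh (c‖f + d‖) ≤ cosh (cM) cosh (c‖f‖) + sinh (cM) / M * ⟪g f, d⟫` with
`g f = (sinh (c‖f‖) / ‖f‖) • f`, which follows from the convexity of `x ↦ cosh (c √x)`.
Since `g (Z⁽ᵏ⁾)` is `σ(Z⁽ᵏ⁾)`-measurable, the weak martingale property kills the linear term in
expectation, so `E cosh (c‖Z⁽ˡ⁾‖) ≤ cosh (cM) ^ l ≤ exp (l c² M² / 2)`. Markov's inequality for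
`cosh (c‖Z⁽ˡ⁾‖)` with `c = a / (l M)` then gives `P(‖Z⁽ˡ⁾‖ ≥ M a) ≤ 2 exp (-a² / (2l))`, which is
smaller than the claimed bound.
-/

open MeasureTheory Real Set
open scoped RealInnerProductSpace

lemma Real.convexOn_sinh_Ici : ConvexOn ℝ (Ici 0) sinh := by
  refine MonotoneOn.convexOn_of_deriv (convex_Ici 0) continuous_sinh.continuousOn
    differentiable_sinh.differentiableOn ?_
  rw [interior_Ici, deriv_sinh]
  intro x (hx : 0 < x) y (hy : 0 < y) hxy
  rwa [cosh_le_cosh, abs_of_pos hx, abs_of_pos hy]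

lemma Real.monotoneOn_sinh_mul_div {c : ℝ} (hc : 0 ≤ c) :
    MonotoneOn (fun t => sinh (c * t) / t) (Ioi 0) := by
  rcases hc.eq_or_lt with rfl | hc
  · simpa using monotoneOn_const
  intro s (hs : 0 < s) t (ht : 0 < t) hst
  have hsecant := convexOn_sinh_Ici.secant_mono self_mem_Ici (mul_pos hc hs).le
    (mul_pos hc ht).le (mul_pos hc hs).ne' (mul_pos hc ht).ne' (by gcongr)
  simp only [sinh_zero, sub_zero] at hsecant
  have hrescale : ∀ u ≠ 0, sinh (c * u) / u = c * (sinh (c * u) / (c * u)) := by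
    intro u hu; field_simp
  simp only [hrescale s hs.ne', hrescale t ht.ne']
  gcongr

lemma Real.convexOn_cosh_mul_sqrt {c : ℝ} (hc : 0 ≤ c) :
    ConvexOn ℝ (Ici 0) (fun x => cosh (c * √x)) := by
  have hderiv : ∀ x ∈ Ioi (0 : ℝ),
      HasDerivAt (fun x => cosh (c * √x)) (c / 2 * (sinh (c * √x) / √x)) x := by
    intro x (hx : 0 < x)
    refine (((hasDerivAt_sqrt hx.ne').const_mul c).cosh).congr_deriv ?_
    field_simp
  refine MonotoneOn.convexOn_of_deriv (convex_Ici 0) (by fun_prop) ?_ ?_ <;> rw [interior_Ici]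
  · exact fun x hx => (hderiv x hx).differentiableAt.differentiableWithinAt
  · intro x hx y hy hxy
    rw [(hderiv x hx).deriv, (hderiv y hy).deriv]
    gcongr ?_ * ?_
    exact monotoneOn_sinh_mul_div hc (sqrt_pos.2 hx) (sqrt_pos.2 hy) (sqrt_le_sqrt hxy)

lemma Real.cosh_mul_sqrt_le {c M A α : ℝ} (hc : 0 ≤ c) (hM : 0 < M) (hA : 0 ≤ A)
    (hα : |α| ≤ M) :
    cosh (c * √(A ^ 2 + 2 * A * α + M ^ 2)) ≤
      cosh (c * A) * cosh (c * M) + sinh (c * A) * sinh (c * M) * (α / M) := by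
  obtain ⟨hα₁, hα₂⟩ := abs_le.1 hα
  -- The radicand is the `θ`-combination of `(A + M) ^ 2` and `(A - M) ^ 2`, and the right-hand
  -- side is the matching chord of the convex function `cosh (c * √·)`.
  set θ := (M + α) / (2 * M)
  have hθ₀ : 0 ≤ θ := div_nonneg (by linarith) (by positivity)
  have hθ₁ : 0 ≤ 1 - θ := by
    rw [sub_nonneg, div_le_one (by positivity)]; linarith
  have hcomb : A ^ 2 + 2 * A * α + M ^ 2 = θ * (A + M) ^ 2 + (1 - θ) * (A - M) ^ 2 := by
    unfold θ; field_simp; ring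
  have hconv := (convexOn_cosh_mul_sqrt hc).2 (sq_nonneg (A + M)) (sq_nonneg (A - M))
    hθ₀ hθ₁ (add_sub_cancel θ 1)
  have hsqrt_sub : cosh (c * √((A - M) ^ 2)) = cosh (c * (A - M)) := by
    rw [sqrt_sq_eq_abs, ← cosh_abs (c * (A - M)), abs_mul, abs_of_nonneg hc]
  simp only [smul_eq_mul] at hconv
  rw [← hcomb, hsqrt_sub, sqrt_sq (by linarith)] at hconv
  refine hconv.trans_eq ?_
  rw [mul_add, mul_sub, cosh_add, cosh_sub]
  unfold θ
  field_simp
  ring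

section NormedAddCommGroup

variable {E : Type*} [NormedAddCommGroup E] {Ω : Type*} {mΩ : MeasurableSpace Ω} {μ : Measure Ω}

lemma integrable_cosh_mul_norm [IsFiniteMeasure μ] {X : Ω → E} (hX : AEStronglyMeasurable X μ)
    {B : ℝ} (hXB : ∀ᵐ ω ∂μ, ‖X ω‖ ≤ B) (c : ℝ) :
    Integrable (fun ω => cosh (c * ‖X ω‖)) μ := by
  refine .of_bound (by fun_prop) (cosh (|c| * B)) ?_
  filter_upwards [hXB] with ω hω
  rw [norm_eq_abs, abs_of_pos (cosh_pos _), cosh_le_cosh, abs_mul, abs_norm]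
  exact (mul_le_mul_of_nonneg_left hω (abs_nonneg c)).trans (le_abs_self _)

lemma ae_norm_le_mul_of_norm_sub_le {Z : ℕ → Ω → E} {L : ℕ} {M : ℝ} (hZ0 : Z 0 = 0)
    (hinc : ∀ k < L, ∀ᵐ ω ∂μ, ‖Z (k + 1) ω - Z k ω‖ ≤ M) :
    ∀ k ≤ L, ∀ᵐ ω ∂μ, ‖Z k ω‖ ≤ k * M := by
  intro k hk
  induction k with
  | zero => simp [hZ0]
  | succ k ih =>
    filter_upwards [ih (by omega), hinc k hk] with ω h₁ h₂
    calc ‖Z (k + 1) ω‖ = ‖Z k ω + (Z (k + 1) ω - Z k ω)‖ := by rw [add_sub_cancel]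
      _ ≤ k * M + M := (norm_add_le _ _).trans (add_le_add h₁ h₂)
      _ = (k + 1 : ℕ) * M := by push_cast; ring

lemma measureReal_le_two_mul_exp_of_integral_cosh_le [IsFiniteMeasure μ] {X : Ω → E} {v t : ℝ}
    (hv : 0 < v) (ht : 0 ≤ t) (hint : ∀ c, Integrable (fun ω => cosh (c * ‖X ω‖)) μ)
    (hmgf : ∀ c, 0 ≤ c → ∫ ω, cosh (c * ‖X ω‖) ∂μ ≤ exp (c ^ 2 * v / 2)) :
    μ.real {ω | t ≤ ‖X ω‖} ≤ 2 * exp (-(t ^ 2 / (2 * v))) := by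
  set c := t / v
  have hc : 0 ≤ c := div_nonneg ht hv.le
  have hmarkov : cosh (c * t) * μ.real {ω | t ≤ ‖X ω‖} ≤ ∫ ω, cosh (c * ‖X ω‖) ∂μ := by
    calc cosh (c * t) * μ.real {ω | t ≤ ‖X ω‖}
        ≤ cosh (c * t) * μ.real {ω | cosh (c * t) ≤ cosh (c * ‖X ω‖)} := by
          refine mul_le_mul_of_nonneg_left (measureReal_mono fun ω (hω : t ≤ ‖X ω‖) => ?_)
            (cosh_pos _).le
          change cosh (c * t) ≤ cosh (c * ‖X ω‖)
          rw [cosh_le_cosh, abs_of_nonneg (by positivity), abs_of_nonneg (by positivity)]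
          gcongr
      _ ≤ ∫ ω, cosh (c * ‖X ω‖) ∂μ :=
          mul_meas_ge_le_integral_of_nonneg (ae_of_all _ fun ω => (cosh_pos _).le) (hint c) _
  have hexp_le_cosh : exp (c * t) / 2 ≤ cosh (c * t) := by
    rw [cosh_eq]; gcongr; exact le_add_of_nonneg_right (exp_pos _).le
  calc μ.real {ω | t ≤ ‖X ω‖} ≤ exp (c ^ 2 * v / 2) / (exp (c * t) / 2) := by
        rw [le_div_iff₀ (by positivity), mul_comm]
        calc exp (c * t) / 2 * μ.real {ω | t ≤ ‖X ω‖}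
            ≤ cosh (c * t) * μ.real {ω | t ≤ ‖X ω‖} := by gcongr
          _ ≤ exp (c ^ 2 * v / 2) := hmarkov.trans (hmgf c hc)
    _ = 2 * exp (-(t ^ 2 / (2 * v))) := by
        rw [div_div_eq_mul_div, mul_comm, mul_div_assoc, ← exp_sub]
        congr 2
        unfold c
        field_simp
        ring

end NormedAddCommGroup

section InnerProductSpace

variable {E : Type*} [NormedAddCommGroup E] [InnerProductSpace ℝ E]

/-- `c⁻¹` times the gradient of `cosh (c * ‖·‖)`, extended by `0` at the origin. -/
noncomputable def coshNormGrad (c : ℝ) (f : E) : E :=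
  (sinh (c * ‖f‖) / ‖f‖) • f

lemma norm_coshNormGrad_le {c B : ℝ} (hc : 0 ≤ c) {f : E} (hf : ‖f‖ ≤ B) :
    ‖coshNormGrad c f‖ ≤ sinh (c * B) := by
  rcases eq_or_ne f 0 with rfl | hf₀
  · simpa [coshNormGrad] using mul_nonneg hc ((norm_nonneg _).trans hf)
  have hpos : 0 < ‖f‖ := norm_pos_iff.2 hf₀
  rw [coshNormGrad, norm_smul, norm_div, norm_norm, div_mul_cancel₀ _ hpos.ne', norm_eq_abs,
    abs_of_nonneg (sinh_nonneg_iff.2 (by positivity)), sinh_le_sinh]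
  gcongr

lemma measurable_coshNormGrad [MeasurableSpace E] [BorelSpace E] [SecondCountableTopology E]
    (c : ℝ) : Measurable (coshNormGrad c : E → E) := by
  unfold coshNormGrad
  fun_prop

lemma cosh_mul_norm_add_le {c M : ℝ} (hc : 0 ≤ c) (hM : 0 < M) (f d : E) (hd : ‖d‖ ≤ M) :
    cosh (c * ‖f + d‖) ≤
      cosh (c * M) * cosh (c * ‖f‖) + sinh (c * M) / M * ⟪coshNormGrad c f, d⟫ := by
  rcases eq_or_ne f 0 with rfl | hf₀
  · simp only [zero_add, norm_zero, mul_zero, cosh_zero, mul_one, coshNormGrad, smul_zero,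
      inner_zero_left, add_zero, cosh_le_cosh]
    rw [abs_of_nonneg (by positivity), abs_of_nonneg (by positivity)]
    gcongr
  have hpos : 0 < ‖f‖ := norm_pos_iff.2 hf₀
  set α := ⟪f, d⟫ / ‖f‖
  have hα : |α| ≤ M := by
    rw [abs_div, abs_norm, div_le_iff₀ hpos]
    nlinarith [abs_real_inner_le_norm f d, norm_nonneg f]
  have hnorm_sq : ‖f + d‖ ^ 2 ≤ ‖f‖ ^ 2 + 2 * ‖f‖ * α + M ^ 2 := by
    have : 2 * ‖f‖ * α = 2 * ⟪f, d⟫ := by unfold α; field_simp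
    rw [norm_add_sq_real, this]
    nlinarith [norm_nonneg d]
  calc cosh (c * ‖f + d‖) ≤ cosh (c * √(‖f‖ ^ 2 + 2 * ‖f‖ * α + M ^ 2)) := by
        rw [cosh_le_cosh, abs_of_nonneg (by positivity), abs_of_nonneg (by positivity)]
        gcongr
        exact le_sqrt_of_sq_le hnorm_sq
    _ ≤ _ := cosh_mul_sqrt_le hc hM hpos.le hα
    _ = _ := by
        rw [coshNormGrad, real_inner_smul_left]
        unfold α
        field_simp

variable {Ω : Type*} {m mΩ : MeasurableSpace Ω} {μ : Measure Ω} [CompleteSpace E]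

lemma integral_inner_eq_of_condExp_eq (hm : m ≤ mΩ) [SigmaFinite (μ.trim hm)] {Y X X' : Ω → E}
    (hY : StronglyMeasurable[m] Y) {C : ℝ} (hYC : ∀ᵐ ω ∂μ, ‖Y ω‖ ≤ C) (hX' : Integrable X' μ)
    (hcond : μ[X' | m] =ᵐ[μ] X) :
    ∫ ω, ⟪Y ω, X' ω⟫ ∂μ = ∫ ω, ⟪Y ω, X ω⟫ ∂μ := by
  have hpull := condExp_bilin_of_stronglyMeasurable_left (innerSL ℝ) hY
    ((innerSL ℝ).integrable_of_bilin_of_bdd_left C (hY.mono hm).aestronglyMeasurable hYC hX') hX'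
  rw [← integral_condExp hm]
  refine integral_congr_ae (hpull.trans ?_)
  filter_upwards [hcond] with ω hω
  rw [hω, innerSL_apply_apply]

variable [MeasurableSpace E] [BorelSpace E] [SecondCountableTopology E]

lemma integral_cosh_mul_norm_le_of_condExp_eq [IsFiniteMeasure μ] (hm : m ≤ mΩ) {X X' : Ω → E}
    (hX : Measurable[m] X) (hX' : AEStronglyMeasurable X' μ) {B M c : ℝ}
    (hXB : ∀ᵐ ω ∂μ, ‖X ω‖ ≤ B) (hM : 0 < M) (hXX' : ∀ᵐ ω ∂μ, ‖X' ω - X ω‖ ≤ M) (hc : 0 ≤ c)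
    (hcond : μ[X' | m] =ᵐ[μ] X) :
    ∫ ω, cosh (c * ‖X' ω‖) ∂μ ≤ cosh (c * M) * ∫ ω, cosh (c * ‖X ω‖) ∂μ := by
  have hXΩ : AEStronglyMeasurable X μ := (hX.mono hm le_rfl).aestronglyMeasurable
  have hX'B : ∀ᵐ ω ∂μ, ‖X' ω‖ ≤ B + M := by
    filter_upwards [hXB, hXX'] with ω h₁ h₂
    calc ‖X' ω‖ = ‖X ω + (X' ω - X ω)‖ := by rw [add_sub_cancel]
      _ ≤ B + M := (norm_add_le _ _).trans (add_le_add h₁ h₂)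
  have hXint : Integrable X μ := .of_bound hXΩ B hXB
  have hX'int : Integrable X' μ := .of_bound hX' (B + M) hX'B
  set Y := fun ω => coshNormGrad c (X ω)
  have hY : StronglyMeasurable[m] Y := ((measurable_coshNormGrad c).comp hX).stronglyMeasurable
  have hYB : ∀ᵐ ω ∂μ, ‖Y ω‖ ≤ sinh (c * B) := hXB.mono fun ω h => norm_coshNormGrad_le hc h
  have hinner_int : ∀ {V : Ω → E}, Integrable V μ → Integrable (fun ω => ⟪Y ω, V ω⟫) μ :=
    fun hV => (innerSL ℝ).integrable_of_bilin_of_bdd_left _ (hY.mono hm).aestronglyMeasurable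
      hYB hV
  have hcentered : ∫ ω, ⟪Y ω, X' ω - X ω⟫ ∂μ = 0 := by
    simp_rw [inner_sub_right]
    rw [integral_sub (hinner_int hX'int) (hinner_int hXint),
      integral_inner_eq_of_condExp_eq hm hY hYB hX'int hcond, sub_self]
  have hcosh_int := integrable_cosh_mul_norm hXΩ hXB c
  have hlin_int : Integrable (fun ω => ⟪Y ω, X' ω - X ω⟫) μ := hinner_int (hX'int.sub hXint)
  calc ∫ ω, cosh (c * ‖X' ω‖) ∂μ
      ≤ ∫ ω, (cosh (c * M) * cosh (c * ‖X ω‖) + sinh (c * M) / M * ⟪Y ω, X' ω - X ω⟫) ∂μ := by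
        refine integral_mono_ae (integrable_cosh_mul_norm hX' hX'B c)
          ((hcosh_int.const_mul _).add (hlin_int.const_mul _)) ?_
        filter_upwards [hXX'] with ω hω
        simpa using cosh_mul_norm_add_le hc hM (X ω) (X' ω - X ω) hω
    _ = cosh (c * M) * ∫ ω, cosh (c * ‖X ω‖) ∂μ := by
        rw [integral_add (hcosh_int.const_mul _) (hlin_int.const_mul _), integral_const_mul,
          integral_const_mul, hcentered, mul_zero, add_zero]

lemma integral_cosh_mul_norm_le_cosh_pow [IsProbabilityMeasure μ] {Z : ℕ → Ω → E} {L : ℕ}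
    {M c : ℝ} (hZ : ∀ k, Measurable (Z k)) (hZ0 : Z 0 = 0) (hM : 0 < M)
    (hinc : ∀ k < L, ∀ᵐ ω ∂μ, ‖Z (k + 1) ω - Z k ω‖ ≤ M)
    (hmart : ∀ k < L, μ[Z (k + 1) | MeasurableSpace.comap (Z k) inferInstance] =ᵐ[μ] Z k)
    (hc : 0 ≤ c) :
    ∀ k ≤ L, ∫ ω, cosh (c * ‖Z k ω‖) ∂μ ≤ cosh (c * M) ^ k := by
  intro k hk
  induction k with
  | zero => simp [hZ0]
  | succ k ih =>
    calc ∫ ω, cosh (c * ‖Z (k + 1) ω‖) ∂μ ≤ cosh (c * M) * ∫ ω, cosh (c * ‖Z k ω‖) ∂μ :=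
          integral_cosh_mul_norm_le_of_condExp_eq (hZ k).comap_le (comap_measurable (Z k))
            (hZ (k + 1)).aestronglyMeasurable (ae_norm_le_mul_of_norm_sub_le hZ0 hinc k (by omega))
            hM (hinc k hk) hc (hmart k hk)
      _ ≤ cosh (c * M) * cosh (c * M) ^ k := by gcongr; exact ih (by omega)
      _ = cosh (c * M) ^ (k + 1) := (pow_succ' _ _).symm

end InnerProductSpace

theorem weakMartingale_centered_layers_tail_bound_general
    {Ω : Type*} {mΩ : MeasurableSpace Ω} (μ : Measure Ω) [IsProbabilityMeasure μ]
    {p L : ℕ} (ν : ℕ → Ω → EuclideanSpace ℝ (Fin p))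
    (hmeas : ∀ l, Measurable (ν l))
    (hZ0 : (fun ω => ν 0 ω - ∫ ω', ν 0 ω' ∂μ) = 0)
    (hmart : ∀ i j, j < i → i ≤ L →
      μ[fun ω => ν i ω - ∫ ω', ν i ω' ∂μ|
          MeasurableSpace.comap (fun ω => ν j ω - ∫ ω', ν j ω' ∂μ) inferInstance]
        =ᵐ[μ] fun ω => ν j ω - ∫ ω', ν j ω' ∂μ)
    (M : ℝ) (hM : 0 < M)
    (hdiff : ∀ l, 1 ≤ l → l ≤ L → ∀ᵐ ω ∂μ,
      ‖(ν l ω - ∫ ω', ν l ω' ∂μ) - (ν (l - 1) ω - ∫ ω', ν (l - 1) ω' ∂μ)‖ ≤ M) :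
    ∀ l, 1 ≤ l → l ≤ L → ∀ a : ℝ, 0 < a →
      (μ {ω | M * a ≤ ‖ν l ω - ∫ ω', ν l ω' ∂μ‖}).toReal
        < 2 * Real.exp (1 - (a - 1) ^ 2 / (2 * l)) := by
  set Z : ℕ → Ω → EuclideanSpace ℝ (Fin p) := fun k ω => ν k ω - ∫ ω', ν k ω' ∂μ
  have hZ : ∀ k, Measurable (Z k) := fun k => (hmeas k).sub_const _
  have hinc : ∀ k < L, ∀ᵐ ω ∂μ, ‖Z (k + 1) ω - Z k ω‖ ≤ M := fun k hk => by
    simpa only [Nat.add_sub_cancel] using hdiff (k + 1) (by omega) hk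
  intro l hl hlL a ha
  have hmgf (c : ℝ) (hc : 0 ≤ c) :
      ∫ ω, cosh (c * ‖Z l ω‖) ∂μ ≤ exp (c ^ 2 * (l * M ^ 2) / 2) :=
    calc ∫ ω, cosh (c * ‖Z l ω‖) ∂μ ≤ cosh (c * M) ^ l :=
          integral_cosh_mul_norm_le_cosh_pow hZ hZ0 hM hinc
            (fun k hk => hmart (k + 1) k k.lt_succ_self hk) hc l hlL
      _ ≤ exp ((c * M) ^ 2 / 2) ^ l := by gcongr; exact cosh_le_exp_half_sq _
      _ = exp (c ^ 2 * (l * M ^ 2) / 2) := by rw [← exp_nat_mul]; ring_nf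
  have htail := measureReal_le_two_mul_exp_of_integral_cosh_le (by positivity)
    (by positivity : 0 ≤ M * a)
    (integrable_cosh_mul_norm (hZ l).aestronglyMeasurable
      (ae_norm_le_mul_of_norm_sub_le hZ0 hinc l hlL)) hmgf
  have hl₁ : (1 : ℝ) ≤ l := by exact_mod_cast hl
  have hexponent : -((M * a) ^ 2 / (2 * (l * M ^ 2))) < 1 - (a - 1) ^ 2 / (2 * l) := by
    have hgap : (a - 1) ^ 2 / (2 * l) - a ^ 2 / (2 * l) < 1 := by
      rw [← sub_div, div_lt_one (by positivity)]; nlinarith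
    have hscale : (M * a) ^ 2 / (2 * (l * M ^ 2)) = a ^ 2 / (2 * l) := by field_simp
    linarith
  exact htail.trans_lt (by gcongr)

/-- Concentration of the layer outputs of a stochastic deep neural
network of constant width `p` whose centered outputs form a weak martingale: let
`(ν⁽ˡ⁾(X))_{l=0}^{L}` be Bochner-integrable random vectors in `ℝ^p`, set
`Z⁽ˡ⁾ := ν⁽ˡ⁾(X) − E[ν⁽ˡ⁾(X)]` with `Z⁽⁰⁾ = 0`; if `(Z⁽ˡ⁾)` is a weak martingale,
i.e. `E[Z⁽ⁱ⁾ | σ(Z⁽ʲ⁾)] = Z⁽ʲ⁾` a.s. whenever `j < i ≤ L`, and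
`‖Z⁽ˡ⁾ − Z⁽ˡ⁻¹⁾‖₂ ≤ M` almost surely for every `l ∈ {1,…,L}` (`M > 0`), then for
every `l ∈ {1,…,L}` and `a > 0`,
`P(‖ν⁽ˡ⁾(X) − E[ν⁽ˡ⁾(X)]‖₂ ≥ M·a) < 2 exp(1 − (a−1)²/(2l))`. -/
theorem weakMartingale_centered_layers_tail_bound
    {Ω : Type*} {mΩ : MeasurableSpace Ω} (μ : Measure Ω) [IsProbabilityMeasure μ]
    {p L : ℕ} (ν : ℕ → Ω → EuclideanSpace ℝ (Fin p))
    (hmeas : ∀ l, Measurable (ν l))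
    (hint : ∀ l, Integrable (ν l) μ)
    (hZ0 : (fun ω => ν 0 ω - ∫ ω', ν 0 ω' ∂μ) = 0)
    (hmart : ∀ i j, j < i → i ≤ L →
      μ[fun ω => ν i ω - ∫ ω', ν i ω' ∂μ|
          MeasurableSpace.comap (fun ω => ν j ω - ∫ ω', ν j ω' ∂μ) inferInstance]
        =ᵐ[μ] fun ω => ν j ω - ∫ ω', ν j ω' ∂μ)
    (M : ℝ) (hM : 0 < M)
    (hdiff : ∀ l, 1 ≤ l → l ≤ L → ∀ᵐ ω ∂μ,
      ‖(ν l ω - ∫ ω', ν l ω' ∂μ) - (ν (l - 1) ω - ∫ ω', ν (l - 1) ω' ∂μ)‖ ≤ M) :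
    ∀ l, 1 ≤ l → l ≤ L → ∀ a : ℝ, 0 < a →
      (μ {ω | M * a ≤ ‖ν l ω - ∫ ω', ν l ω' ∂μ‖}).toReal
        < 2 * Real.exp (1 - (a - 1) ^ 2 / (2 * l)) :=
  weakMartingale_centered_layers_tail_bound_general (mΩ := mΩ) μ ν hmeas hZ0 hmart M hM hdiff
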